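/- arXiv:1201.0171 — 2 statements merged into one kernel-verified Lean document; each statement's English description precedes it below -/
import Mathlib

section
/- For n ≥ 2 with n ≡ ℓ (mod 4d) where ℓ is odd and 1 ≤ ℓ ≤ 2d-1: SG(n) = 0 if and only if SG(⌈n/(2d)⌉) ≠ 0. -/
/-- mex of the two-element set {a, b}: the least natural number not in {a, b}. -/
def mex2 (a b : ℕ) : ℕ :=
  if 0 ≠ a ∧ 0 ≠ b then 0 else if 1 ≠ a ∧ 1 ≠ b then 1 else if 2 ≠ a ∧ 2 ≠ b then 2 else 3

/-- The Sprague–Grundy sequence of the game G_{1,2d}: SG d 1 = 0 and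
    SG d n = mex {SG d (n-1), SG d ⌈n/(2d)⌉} for n ≥ 2. -/
def SG (d : ℕ) : ℕ → ℕ
  | 0 => 0
  | 1 => 0
  | n + 2 => mex2 (SG d (n + 1)) (SG d ((n + 2 + (2 * d - 1)) / (2 * d)))
decreasing_by
  · omega
  · rcases Nat.eq_zero_or_pos d with h | h
    · simp [h]
    · have h2 : 0 < 2 * d := by omega
      rw [Nat.div_lt_iff_lt_mul h2]
      simp only [Nat.succ_eq_add_one]
      have h6 : (n + 1 + 1) * 2 ≤ (n + 1 + 1) * (2 * d) := Nat.mul_le_mul_left _ (by omega)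
      have h8 : 2 * (2 * d) ≤ (n + 1 + 1) * (2 * d) := Nat.mul_le_mul_right _ (by omega)
      omega

/-! At an odd position `n ≥ 3` the previous position `n - 1` is even, and even positions `≥ 2`
never have Grundy value `0`; so `SG n = 0` exactly when its other option `SG ⌈n/(2d)⌉` is
nonzero. Evenness is propagated by induction: if `SG (2k+4) = 0` then `SG (2k+3) ≠ 0`, which
(because `SG (2k+2) ≠ 0`) forces `SG ⌈(2k+3)/(2d)⌉ = 0`; but `⌈(2k+3)/(2d)⌉ = ⌈(2k+4)/(2d)⌉`
since `2d` cannot divide the odd number `2k+3`, contradicting `SG (2k+4) = 0`. -/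

lemma mex2_eq_zero_iff (a b : ℕ) : mex2 a b = 0 ↔ a ≠ 0 ∧ b ≠ 0 := by
  unfold mex2
  grind

lemma SG_add_two_eq_zero_iff (d n : ℕ) :
    SG d (n + 2) = 0 ↔ SG d (n + 1) ≠ 0 ∧ SG d ((n + 2 + (2 * d - 1)) / (2 * d)) ≠ 0 := by
  rw [SG, mex2_eq_zero_iff]

lemma add_one_add_sub_one_div_of_not_dvd {k m : ℕ} (h : ¬ k ∣ m) :
    (m + 1 + (k - 1)) / k = (m + (k - 1)) / k := by
  rcases Nat.eq_zero_or_pos k with rfl | hk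
  · simp
  have hsucc : ¬ k ∣ m + (k - 1) + 1 := by
    rwa [show m + (k - 1) + 1 = m + k by omega, Nat.dvd_add_self_right]
  rw [show m + 1 + (k - 1) = m + (k - 1) + 1 by omega, Nat.succ_div_of_not_dvd hsucc]

lemma SG_ne_zero_of_even (d : ℕ) {m : ℕ} (hm : Even m) (h2 : 2 ≤ m) : SG d m ≠ 0 := by
  obtain ⟨k, rfl⟩ : ∃ k, m = 2 * k + 2 := ⟨m / 2 - 1, by rcases hm with ⟨j, rfl⟩; omega⟩
  clear hm h2
  induction k with
  | zero =>
    rw [ne_eq, SG_add_two_eq_zero_iff, SG]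
    simp
  | succ k ih =>
    intro hzero
    obtain ⟨hodd_ne, hceil_ne⟩ := (SG_add_two_eq_zero_iff d (2 * k + 2)).mp hzero
    have hodd_ceil : SG d ((2 * k + 3 + (2 * d - 1)) / (2 * d)) = 0 := by
      by_contra hne
      exact hodd_ne ((SG_add_two_eq_zero_iff d (2 * k + 1)).mpr ⟨ih, hne⟩)
    have hodd_not_dvd : ¬ 2 * d ∣ 2 * k + 3 := by
      rintro ⟨c, hc⟩
      rw [mul_assoc] at hc
      omega
    rw [add_one_add_sub_one_div_of_not_dvd hodd_not_dvd] at hceil_ne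
    exact hceil_ne hodd_ceil

theorem stmt_7_general (d : ℕ) (n : ℕ) (hn : 2 ≤ n) (ℓ : ℕ) (hodd : Odd ℓ)
    (hmod : n % (4 * d) = ℓ) :
    SG d n = 0 ↔ SG d ((n + (2 * d - 1)) / (2 * d)) ≠ 0 := by
  have hn_odd : n % 2 = 1 := by
    rw [← Nat.mod_mod_of_dvd n (Dvd.intro (2 * d) (by ring) : 2 ∣ 4 * d), hmod]
    exact Nat.odd_iff.mp hodd
  obtain ⟨k, rfl⟩ : ∃ k, n = k + 2 := ⟨n - 2, by omega⟩
  have hprev : SG d (k + 1) ≠ 0 :=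
    SG_ne_zero_of_even d (Nat.even_iff.mpr (by omega)) (by omega)
  rw [SG_add_two_eq_zero_iff]
  exact and_iff_right hprev

theorem stmt_7 (d : ℕ) (hd : 1 ≤ d) (n : ℕ) (hn : 2 ≤ n) (ℓ : ℕ) (hodd : Odd ℓ)
    (hl1 : 1 ≤ ℓ) (hl2 : ℓ ≤ 2 * d - 1) (hmod : n % (4 * d) = ℓ) :
    SG d n = 0 ↔ SG d ((n + (2 * d - 1)) / (2 * d)) ≠ 0 :=
  stmt_7_general d n hn ℓ hodd hmod
end

section
/- If SG*(a) ≠ 0, then SG*(a) = SG(2d·a), where SG*(a) = (3 - SG(a)) mod 3. -/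
/-- SG*(n) = (3 - SG(n)) mod 3. -/
def SGstar (d n : ℕ) : ℕ := (3 - SG d n) % 3

/-!
On the block `2db < i ≤ 2d(b+1)` the second option `⌈i/(2d)⌉` is constantly `b+1`, so with
`s = SG(b+1)` the sequence obeys `SG(i) = mex{SG(i-1), s}` there. Once a value differs from `s`,
this recursion just swaps the two elements of `{0,1,2} \ {s}`, so the block alternates with period 2.

For `b ≥ 1` induction on `b` gives `SG(2db) ≠ 0`. If `s ≠ 0` the block therefore starts with
`SG(2db+1) = mex{SG(2db), s} = 0` and alternates `0, 3-s, 0, …` up to its even-length end,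
giving `SG(2d(b+1)) = 3 - s = SG*(b+1)`.
-/

lemma mex2_le_two (a b : ℕ) : mex2 a b ≤ 2 := by
  unfold mex2; split_ifs <;> omega

lemma mex2_mex2_right {x s : ℕ} (hx : x ≤ 2) (hs : s ≤ 2) (hxs : x ≠ s) :
    mex2 (mex2 x s) s = x := by
  unfold mex2; split_ifs <;> omega

lemma mex2_eq_zero {x s : ℕ} (hx : x ≠ 0) (hs : s ≠ 0) : mex2 x s = 0 := by
  unfold mex2; split_ifs <;> omega

lemma mex2_zero_left {s : ℕ} (hs : s ≠ 0) (hs2 : s ≤ 2) : mex2 0 s = 3 - s := by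
  unfold mex2; split_ifs <;> omega

lemma ceil_div_eq_succ {n b i : ℕ} (hlo : n * b < i) (hhi : i ≤ n * (b + 1)) :
    (i + (n - 1)) / n = b + 1 := by
  have hn : 0 < n := Nat.pos_of_ne_zero (by rintro rfl; simp at hlo hhi; omega)
  have e1 : n * (b + 1) = n * b + n := by ring
  have e2 : (b + 1) * n = n * b + n := by ring
  have e3 : (b + 1 + 1) * n = n * b + n + n := by ring
  apply Nat.div_eq_of_lt_le <;> omega

namespace SG

variable {d : ℕ}

lemma le_two (n : ℕ) : SG d n ≤ 2 := by
  match n with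
  | 0 | 1 => simp [SG]
  | n + 2 => rw [SG]; exact mex2_le_two _ _

@[simp] lemma zero : SG d 0 = 0 := by rw [SG]

@[simp] lemma one : SG d 1 = 0 := by rw [SG]

lemma succ_eq_mex2 {b j : ℕ} (hj : 1 ≤ j) (hlo : 2 * d * b ≤ j) (hhi : j < 2 * d * (b + 1)) :
    SG d (j + 1) = mex2 (SG d j) (SG d (b + 1)) := by
  obtain ⟨n, rfl⟩ : ∃ n, j = n + 1 := ⟨j - 1, by omega⟩
  rw [SG, ceil_div_eq_succ (n := 2 * d) (b := b) (by omega) (by omega)]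

lemma add_two_mul_eq {b j : ℕ} (hj : 1 ≤ j) (hlo : 2 * d * b ≤ j)
    (hne : SG d j ≠ SG d (b + 1)) :
    ∀ k, j + 2 * k ≤ 2 * d * (b + 1) → SG d (j + 2 * k) = SG d j
  | 0, _ => rfl
  | k + 1, hk => by
    have ih := add_two_mul_eq hj hlo hne k (by omega)
    rw [show j + 2 * (k + 1) = j + 2 * k + 1 + 1 by ring,
      succ_eq_mex2 (b := b) (by omega) (by omega) (by omega),
      succ_eq_mex2 (b := b) (by omega) (by omega) (by omega), ih]
    exact mex2_mex2_right (le_two j) (le_two _) hne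

lemma two_mul_succ_of_eq_zero {b : ℕ} (hm : SG d (2 * d * b) ≠ 0) (hs : SG d (b + 1) = 0) :
    SG d (2 * d * (b + 1)) = SG d (2 * d * b) := by
  have hb : 1 ≤ 2 * d * b := Nat.one_le_iff_ne_zero.mpr (by rintro h; simp [h] at hm)
  rw [show 2 * d * (b + 1) = 2 * d * b + 2 * d by ring]
  exact add_two_mul_eq hb le_rfl (by omega) _ (by ring_nf; omega)

lemma two_mul_succ_of_ne_zero {b : ℕ} (hm : SG d (2 * d * b) ≠ 0) (hs : SG d (b + 1) ≠ 0) :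
    SG d (2 * d * (b + 1)) = 3 - SG d (b + 1) := by
  have hb : 1 ≤ 2 * d * b := Nat.one_le_iff_ne_zero.mpr (by rintro h; simp [h] at hm)
  have hd : 1 ≤ d := Nat.one_le_iff_ne_zero.mpr (by rintro rfl; simp at hb)
  have hhi : 2 * d * b < 2 * d * (b + 1) := by nlinarith
  have hstart : SG d (2 * d * b + 1) = 0 := by
    rw [succ_eq_mex2 hb le_rfl hhi]
    exact mex2_eq_zero hm hs
  have hlast : SG d (2 * d * b + 1 + 2 * (d - 1)) = 0 := by
    rw [add_two_mul_eq (b := b) (by omega) (by omega) (by rw [hstart]; exact Ne.symm hs)]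
    · exact hstart
    · rw [Nat.mul_add] at *; omega
  have hend : 2 * d * (b + 1) = 2 * d * b + 1 + 2 * (d - 1) + 1 := by
    rw [Nat.mul_add]; omega
  rw [hend, succ_eq_mex2 (b := b) (by omega) (by omega) (by omega), hlast]
  exact mex2_zero_left hs (le_two _)

lemma two_mul_ne_zero (hd : 1 ≤ d) {a : ℕ} (ha : 1 ≤ a) : SG d (2 * d * a) ≠ 0 := by
  induction a, ha using Nat.le_induction with
  | base =>
    have h2 : SG d 2 = 1 := by
      rw [succ_eq_mex2 (b := 0) le_rfl (by simp) (by omega)]; simp [mex2]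
    have h2d := add_two_mul_eq (d := d) (b := 0) (j := 2) (by norm_num) (by simp)
      (by simp [h2]) (d - 1) (by omega)
    rw [show 2 * d * 1 = 2 + 2 * (d - 1) by omega, h2d, h2]
    exact one_ne_zero
  | succ b _ ih =>
    by_cases hs : SG d (b + 1) = 0
    · rwa [two_mul_succ_of_eq_zero ih hs]
    · rw [two_mul_succ_of_ne_zero ih hs]
      have := le_two (d := d) (b + 1)
      omega

end SG

theorem stmt_14_general (d : ℕ) (hd : 1 ≤ d) (a : ℕ) (h : SGstar d a ≠ 0) :
    SGstar d a = SG d (2 * d * a) := by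
  have hs : SG d a ≠ 0 := by rintro h0; simp [SGstar, h0] at h
  obtain ⟨b, rfl⟩ : ∃ b, a = b + 1 := Nat.exists_eq_succ_of_ne_zero (by rintro rfl; simp at hs)
  have hb : 1 ≤ b := Nat.one_le_iff_ne_zero.mpr (by rintro rfl; simp at hs)
  rw [SG.two_mul_succ_of_ne_zero (SG.two_mul_ne_zero hd hb) hs]
  have := SG.le_two (d := d) (b + 1)
  unfold SGstar
  omega

theorem stmt_14 (d : ℕ) (hd : 1 ≤ d) (a : ℕ) (ha : 1 ≤ a) (h : SGstar d a ≠ 0) :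
    SGstar d a = SG d (2 * d * a) :=
  stmt_14_general d hd a h
end
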